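/- For a > 0, b ∈ ℝ with a ≠ b, and ℓ > 0, the quantity F(a,b,ℓ) = (bΓ(a,b,ℓ) − 2a𝒢(a,b,ℓ))/(b−a) equals 2ℓ√a · exp(−ℓ²b²/(8a)) · [h(ℓ(b−2a)/(2√a)) − h(−ℓb/(2√a))]/(b−a), and this quantity is strictly positive. -/

import Mathlib

open Real

noncomputable def Phi (x : ℝ) : ℝ :=
  (Real.sqrt (2 * Real.pi))⁻¹ * ∫ y in Set.Iic x, Real.exp (-y ^ 2 / 2)

noncomputable def Gam (a b ℓ : ℝ) : ℝ :=
  ℓ ^ 2 * Phi (-(ℓ * b) / (2 * Real.sqrt a)) +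
    ℓ ^ 2 * Real.exp (ℓ ^ 2 * (a - b) / 2) * Phi (ℓ * (b / (2 * Real.sqrt a) - Real.sqrt a))

noncomputable def calG (a b ℓ : ℝ) : ℝ :=
  ℓ ^ 2 * Real.exp (ℓ ^ 2 * (a - b) / 2) * Phi (ℓ * (b / (2 * Real.sqrt a) - Real.sqrt a))

/-- `h(x) = x exp(x²/2) Φ(x)`. -/
noncomputable def hfun (x : ℝ) : ℝ := x * Real.exp (x ^ 2 / 2) * Phi x

/-!
For `s = √a`, completing the square turns `ℓ² c e^{ℓ²(c² - b²)/(8a)} Φ(ℓc/(2s))` into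
`2ℓs e^{-ℓ²b²/(8a)} h(ℓc/(2s))`; with `c = b - 2a` and `c = -b` this is the formula. Positivity
then reduces to `h` being strictly increasing. Its derivative `(1 + x²) e^{x²/2} Φ(x) + x/√(2π)` is
positive by Gordon's lower bound `-x φ(x)/(1 + x²) < Φ(x)` on the Gaussian tail, which holds
because the difference of its two sides increases from `0` at `-∞`.
-/

open MeasureTheory Filter Topology

lemma integrable_exp_neg_sq_div_two : Integrable fun y : ℝ => exp (-y ^ 2 / 2) := by
  simpa [neg_div, div_eq_inv_mul] using integrable_exp_neg_mul_sq (b := (1 : ℝ) / 2) (by norm_num)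

lemma hasDerivAt_Phi (x : ℝ) :
    HasDerivAt Phi ((√(2 * π))⁻¹ * exp (-x ^ 2 / 2)) x := by
  have hcont : Continuous fun y : ℝ => exp (-y ^ 2 / 2) := by fun_prop
  have hFTC : HasDerivAt (fun u => ∫ y in (0 : ℝ)..u, exp (-y ^ 2 / 2)) (exp (-x ^ 2 / 2)) x :=
    intervalIntegral.integral_hasDerivAt_right integrable_exp_neg_sq_div_two.intervalIntegrable
      hcont.aestronglyMeasurable.stronglyMeasurableAtFilter hcont.continuousAt
  have hsplit : ∀ u, ∫ y in Set.Iic u, exp (-y ^ 2 / 2) =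
      (∫ y in Set.Iic 0, exp (-y ^ 2 / 2)) + ∫ y in (0 : ℝ)..u, exp (-y ^ 2 / 2) := fun u => by
    rw [← intervalIntegral.integral_Iic_sub_Iic integrable_exp_neg_sq_div_two.integrableOn
      integrable_exp_neg_sq_div_two.integrableOn]
    ring
  have hPhi : Phi = fun u => (√(2 * π))⁻¹ *
      ((∫ y in Set.Iic 0, exp (-y ^ 2 / 2)) + ∫ y in (0 : ℝ)..u, exp (-y ^ 2 / 2)) :=
    funext fun u => by rw [Phi, hsplit]
  rw [hPhi]
  exact (hFTC.const_add _).const_mul _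

lemma tendsto_Phi_atBot : Tendsto Phi atBot (𝓝 0) := by
  have h := (tendsto_integral_Iic_zero (f := fun y : ℝ => exp (-y ^ 2 / 2)) (μ := volume)
    tendsto_id).const_mul (√(2 * π))⁻¹
  rwa [mul_zero] at h

lemma tendsto_exp_neg_sq_div_two_atBot :
    Tendsto (fun x : ℝ => exp (-x ^ 2 / 2)) atBot (𝓝 0) := by
  have hsq : Tendsto (fun x : ℝ => x ^ 2 / 2) atBot atTop := by
    simpa [sq] using (tendsto_id.atBot_mul_atBot₀ tendsto_id).atTop_div_const two_pos
  exact (tendsto_exp_neg_atTop_nhds_zero.comp hsq).congr fun x => by simp [neg_div]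

theorem StrictMono.lt_of_tendsto_atBot {α β : Type*} [TopologicalSpace α] [Preorder α]
    [OrderClosedTopology α] [LinearOrder β] [NoMinOrder β] {f : β → α}
    {a : α} (hf : StrictMono f) (ha : Tendsto f atBot (𝓝 a)) (x : β) : a < f x := by
  obtain ⟨y, hy⟩ := exists_lt x
  exact (hf.monotone.le_of_tendsto ha y).trans_lt (hf hy)

lemma sqrt_two_pi_mul_Phi_add_pos (x : ℝ) :
    0 < √(2 * π) * Phi x + x * exp (-x ^ 2 / 2) / (1 + x ^ 2) := by
  set g : ℝ → ℝ := fun x => √(2 * π) * Phi x + x * exp (-x ^ 2 / 2) / (1 + x ^ 2)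
  have hderiv : ∀ x, HasDerivAt g (2 * exp (-x ^ 2 / 2) / (1 + x ^ 2) ^ 2) x := fun x => by
    have hsq : HasDerivAt (fun x : ℝ => -x ^ 2 / 2) (-x) x :=
      ((hasDerivAt_pow 2 x).neg.div_const 2).congr_deriv (by ring)
    have h1pos : (1 : ℝ) + x ^ 2 ≠ 0 := by positivity
    have hsum := ((hasDerivAt_Phi x).const_mul √(2 * π)).add
      (((hasDerivAt_id' x).mul hsq.exp).div ((hasDerivAt_pow 2 x).const_add 1) h1pos)
    refine hsum.congr_deriv ?_
    have : √(2 * π) ≠ 0 := by positivity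
    simp only [Pi.mul_apply, neg_div, exp_neg]
    field_simp
    ring
  have hmono : StrictMono g := strictMono_of_deriv_pos fun x => by
    rw [(hderiv x).deriv]
    positivity
  have hlim : Tendsto g atBot (𝓝 0) := by
    have hfrac : Tendsto (fun x : ℝ => x * exp (-x ^ 2 / 2) / (1 + x ^ 2)) atBot (𝓝 0) := by
      refine squeeze_zero_norm (fun x => ?_) tendsto_exp_neg_sq_div_two_atBot
      rw [norm_div, norm_mul, Real.norm_eq_abs, Real.norm_of_nonneg (exp_pos _).le,
        Real.norm_of_nonneg (by positivity : (0 : ℝ) ≤ 1 + x ^ 2), mul_div_right_comm]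
      refine mul_le_of_le_one_left (exp_pos _).le ((div_le_one (by positivity)).2 ?_)
      nlinarith [abs_nonneg x, sq_abs x]
    have h := (tendsto_Phi_atBot.const_mul √(2 * π)).add hfrac
    rwa [mul_zero, add_zero] at h
  exact hmono.lt_of_tendsto_atBot hlim x

lemma hasDerivAt_hfun (x : ℝ) :
    HasDerivAt hfun ((1 + x ^ 2) * exp (x ^ 2 / 2) * Phi x + x / √(2 * π)) x := by
  have hsq : HasDerivAt (fun x : ℝ => x ^ 2 / 2) x x := by
    simpa using (hasDerivAt_pow 2 x).div_const 2
  refine (((hasDerivAt_id' x).mul hsq.exp).mul (hasDerivAt_Phi x)).congr_deriv ?_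
  simp only [Pi.mul_apply, neg_div, exp_neg]
  field_simp

lemma strictMono_hfun : StrictMono hfun := strictMono_of_deriv_pos fun x => by
  rw [(hasDerivAt_hfun x).deriv]
  have hfactor : (1 + x ^ 2) * exp (x ^ 2 / 2) * Phi x + x / √(2 * π) =
      exp (x ^ 2 / 2) * (1 + x ^ 2) / √(2 * π) *
        (√(2 * π) * Phi x + x * exp (-x ^ 2 / 2) / (1 + x ^ 2)) := by
    simp only [neg_div, exp_neg]
    field_simp
  rw [hfactor]
  exact mul_pos (by positivity) (sqrt_two_pi_mul_Phi_add_pos x)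

lemma mul_exp_mul_hfun (ℓ b c s : ℝ) (hs : s ≠ 0) :
    2 * ℓ * s * exp (-(ℓ ^ 2 * b ^ 2) / (8 * s ^ 2)) * hfun (ℓ * c / (2 * s)) =
      ℓ ^ 2 * c * exp (ℓ ^ 2 * (c ^ 2 - b ^ 2) / (8 * s ^ 2)) * Phi (ℓ * c / (2 * s)) := by
  have hexp : ℓ ^ 2 * (c ^ 2 - b ^ 2) / (8 * s ^ 2) =
      -(ℓ ^ 2 * b ^ 2) / (8 * s ^ 2) + (ℓ * c / (2 * s)) ^ 2 / 2 := by
    field_simp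
    ring
  rw [hfun, hexp, exp_add]
  field_simp

lemma mul_Gam_sub_mul_calG {a : ℝ} (ha : 0 < a) (b ℓ : ℝ) :
    b * Gam a b ℓ - 2 * a * calG a b ℓ =
      2 * ℓ * √a * exp (-(ℓ ^ 2 * b ^ 2) / (8 * a)) *
        (hfun (ℓ * (b - 2 * a) / (2 * √a)) - hfun (-(ℓ * b) / (2 * √a))) := by
  have hs : √a ≠ 0 := (sqrt_pos.2 ha).ne'
  have hsa : √a ^ 2 = a := sq_sqrt ha.le
  have key := fun c => mul_exp_mul_hfun ℓ b c √a hs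
  rw [hsa] at key
  have h₁ := key (b - 2 * a)
  have h₂ := key (-b)
  have harg : ℓ * (b / (2 * √a) - √a) = ℓ * (b - 2 * a) / (2 * √a) := by
    field_simp
    rw [hsa]
  have hexp₁ : ℓ ^ 2 * ((b - 2 * a) ^ 2 - b ^ 2) / (8 * a) = ℓ ^ 2 * (a - b) / 2 := by
    field_simp
    ring
  rw [hexp₁] at h₁
  rw [mul_neg, neg_sq, sub_self, mul_zero, zero_div, exp_zero] at h₂
  rw [Gam, calG, harg]
  linear_combination h₂ - h₁

theorem StrictMono.sub_div_pos {𝕜 : Type*} [Field 𝕜] [LinearOrder 𝕜] [IsStrictOrderedRing 𝕜]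
    {f : 𝕜 → 𝕜} (hf : StrictMono f) {x y d : 𝕜} (h : 0 < (x - y) / d) :
    0 < (f x - f y) / d := by
  rcases div_pos_iff.1 h with ⟨hxy, hd⟩ | ⟨hxy, hd⟩
  · exact div_pos (sub_pos.2 (hf (sub_pos.1 hxy))) hd
  · exact div_pos_of_neg_of_neg (sub_neg.2 (hf (sub_neg.1 hxy))) hd

/-- For `a > 0`, `b ≠ a`, `ℓ > 0`,
`F(a,b,ℓ) = (bΓ − 2a𝒢)/(b−a) = 2ℓ√a e^{−ℓ²b²/(8a)} (h(ℓ(b−2a)/(2√a)) − h(−ℓb/(2√a)))/(b−a) > 0`. -/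
theorem F_formula_and_pos (a b ℓ : ℝ) (ha : 0 < a) (hab : a ≠ b) (hℓ : 0 < ℓ) :
    (b * Gam a b ℓ - 2 * a * calG a b ℓ) / (b - a) =
      2 * ℓ * Real.sqrt a * Real.exp (-(ℓ ^ 2 * b ^ 2) / (8 * a)) *
        ((hfun (ℓ * (b - 2 * a) / (2 * Real.sqrt a)) - hfun (-(ℓ * b) / (2 * Real.sqrt a))) /
          (b - a)) ∧
    0 < (b * Gam a b ℓ - 2 * a * calG a b ℓ) / (b - a) := by
  have hs : 0 < √a := sqrt_pos.2 ha
  have hgap : (ℓ * (b - 2 * a) / (2 * √a) - -(ℓ * b) / (2 * √a)) / (b - a) = ℓ / √a := by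
    have : b - a ≠ 0 := sub_ne_zero.2 hab.symm
    field_simp
    ring
  have hquot := strictMono_hfun.sub_div_pos (hgap ▸ div_pos hℓ hs)
  rw [mul_Gam_sub_mul_calG ha b ℓ, mul_div_assoc]
  exact ⟨rfl, mul_pos (by positivity) hquot⟩
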